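/- Let G be a connected claw-free cubic graph with at least one bridge, and let G_i be the induced subgraph of G on a connected component of the graph obtained from G by deleting all bridges of G. Suppose G_i is 2-edge-connected, has maximum degree 3, and has at least 5 vertices, and suppose the number of degree-2 vertices of G_i is odd. Let v be a vertex of degree 2 in G_i with neighbors u and w, let s be the neighbor of u in G_i distinct from v and w, and let b be the neighbor of w in G_i distinct from u and v. Then sb is not an edge of G_i. -/

import Mathlib

/-!
The third neighbour `x` of `v` lies outside `Gᵢ`, so `vx` is a bridge and claw-freeness at `v`
makes `uvw` a triangle. If `sb` were an edge, claw-freeness at `s` would close a second triangle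
`sbt`, and the six vertices `v, u, w, s, b, t` would be joined to the rest of `G` only by `vx` and
one further edge `tr`. Since `Gᵢ` has no bridge, `tr` is not an edge of `Gᵢ`; hence `Gᵢ` consists
of these six vertices, and its degree-2 vertices are exactly `v` and `t`: an even number.
-/

open SimpleGraph

/-- For a sequence of levels `s : Fin k → ℕ`, an `S`-packing edge-coloring assigns to each
edge a color in `Fin k` so that any two distinct edges of the same color `i` are at
distance at least `s i + 1` in the line graph, i.e., every walk between them in the line
graph has length greater than `s i`. -/
def SimpleGraph.IsPackingEdgeColoring {V : Type*} (G : SimpleGraph V) {k : ℕ}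
    (s : Fin k → ℕ) (c : G.edgeSet → Fin k) : Prop :=
  ∀ e f : G.edgeSet, e ≠ f → c e = c f →
    ∀ p : G.lineGraph.Walk e f, s (c e) < p.length

/-- A graph is cubic if every vertex has degree 3. -/
def SimpleGraph.IsCubic {V : Type*} (G : SimpleGraph V) : Prop :=
  ∀ v : V, (G.neighborSet v).ncard = 3

/-- A graph is claw-free if it has no induced `K_{1,3}`. -/
def SimpleGraph.ClawFree {V : Type*} (G : SimpleGraph V) : Prop :=
  ¬ ∃ v a b c : V, G.Adj v a ∧ G.Adj v b ∧ G.Adj v c ∧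
      a ≠ b ∧ a ≠ c ∧ b ≠ c ∧ ¬ G.Adj a b ∧ ¬ G.Adj a c ∧ ¬ G.Adj b c

/-- A graph is 2-edge-connected if it is connected, has at least two vertices,
and has no bridge. -/
def SimpleGraph.TwoEdgeConnected {V : Type*} (G : SimpleGraph V) : Prop :=
  G.Connected ∧ Nontrivial V ∧ ∀ e : Sym2 V, ¬ G.IsBridge e

namespace SimpleGraph

variable {V : Type*} {G : SimpleGraph V}

theorem adj_iff_of_ncard_neighborSet_eq_three {a x y z : V}
    (ha : (G.neighborSet a).ncard = 3) (hx : G.Adj a x) (hy : G.Adj a y) (hz : G.Adj a z)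
    (hxy : x ≠ y) (hxz : x ≠ z) (hyz : y ≠ z) (c : V) : G.Adj a c ↔ c = x ∨ c = y ∨ c = z := by
  suffices G.neighborSet a = {x, y, z} by simpa using Set.ext_iff.1 this c
  refine (Set.eq_of_subset_of_ncard_le ?_ ?_ (Set.finite_of_ncard_pos (by omega))).symm
  · simp [Set.insert_subset_iff, hx, hy, hz]
  · rw [ha, Set.ncard_eq_three.mpr ⟨x, y, z, hxy, hxz, hyz, rfl⟩]

theorem exists_adj_ne_ne_of_ncard_neighborSet_eq_three {a x y : V}
    (ha : (G.neighborSet a).ncard = 3) (hxy : x ≠ y) : ∃ z, G.Adj a z ∧ z ≠ x ∧ z ≠ y := by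
  have h : ({x, y} : Set V).ncard < (G.neighborSet a).ncard := by
    rw [ha, Set.ncard_pair hxy]; norm_num
  obtain ⟨z, hz, hz'⟩ := Set.exists_mem_notMem_of_ncard_lt_ncard h
  simp only [Set.mem_insert_iff, Set.mem_singleton_iff, not_or] at hz'
  exact ⟨z, hz, hz'⟩

theorem exists_adj_notMem_of_ncard_neighborSet_induce_lt {S : Set V} {a : S}
    (h : ((G.induce S).neighborSet a).ncard < (G.neighborSet a).ncard) :
    ∃ x, G.Adj a x ∧ x ∉ S := by
  by_contra! hS
  refine h.ne ?_
  rw [← Set.ncard_image_of_injective _ Subtype.val_injective]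
  congr 1
  ext x
  exact ⟨by rintro ⟨x, hx, rfl⟩; exact hx, fun hx ↦ ⟨⟨x, hS x hx⟩, hx, rfl⟩⟩

theorem ClawFree.adj_of_not_adj_of_not_adj (hG : G.ClawFree) {v a b c : V} (ha : G.Adj v a)
    (hb : G.Adj v b) (hc : G.Adj v c) (hab : a ≠ b) (hac : a ≠ c) (hbc : b ≠ c)
    (hna : ¬ G.Adj c a) (hnb : ¬ G.Adj c b) : G.Adj a b :=
  by_contra fun h ↦ hG ⟨v, a, b, c, ha, hb, hc, hab, hac, hbc, h, fun h' ↦ hna h'.symm,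
    fun h' ↦ hnb h'.symm⟩

theorem not_isBridge_of_adj_of_adj {a c d : V} (had : G.Adj a d) (hdc : G.Adj d c) :
    ¬ G.IsBridge s(a, c) := by
  rw [isBridge_iff_forall_walk_mem_edges, not_forall]
  refine ⟨.cons had (.cons hdc .nil), ?_⟩
  simp only [Walk.edges_cons, Walk.edges_nil, List.mem_cons, Sym2.eq_iff, List.not_mem_nil]
  grind [Adj.ne]

theorem ConnectedComponent.mem_supp_of_adj_of_adj_of_adj
    (K : (G.deleteEdges {e | G.IsBridge e}).ConnectedComponent) {a c d : V} (ha : a ∈ K.supp)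
    (had : G.Adj a d) (hdc : G.Adj d c) (hac : G.Adj a c) : c ∈ K.supp :=
  K.mem_supp_of_adj_mem_supp ha (by simp [hac, not_isBridge_of_adj_of_adj had hdc])

theorem isBridge_of_forall_boundary_adj {X : Set V} {a b : V} (ha : a ∈ X) (hb : b ∉ X)
    (hX : ∀ c d, c ∈ X → d ∉ X → G.Adj c d → c = a ∧ d = b) : G.IsBridge s(a, b) := by
  rw [isBridge_iff]
  rintro ⟨p⟩
  obtain ⟨d, -, hd, hd'⟩ := p.exists_boundary_dart X ha hb
  have hadj := d.adj
  rw [deleteEdges_adj] at hadj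
  obtain ⟨h₁, h₂⟩ := hX _ _ hd hd' hadj.1
  exact hadj.2 (by simp [h₁, h₂])

theorem TwoEdgeConnected.eq_univ_of_subsingleton_boundary (hG : G.TwoEdgeConnected)
    {X : Set V} (hne : X.Nonempty)
    (hX : ∀ c d c' d', c ∈ X → d ∉ X → G.Adj c d → c' ∈ X → d' ∉ X → G.Adj c' d' →
      c = c' ∧ d = d') : X = Set.univ := by
  refine Set.eq_univ_of_forall fun z ↦ by_contra fun hz ↦ ?_
  obtain ⟨a, ha⟩ := hne
  obtain ⟨p⟩ := hG.1.preconnected a z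
  obtain ⟨d, -, hd, hd'⟩ := p.exists_boundary_dart X ha hz
  exact hG.2.2 _ (isBridge_of_forall_boundary_adj hd hd' fun c c' hc hc' hcc' ↦
    hX c c' _ _ hc hc' hcc' hd hd' d.adj)

theorem TwoEdgeConnected.subset_of_subsingleton_boundary {S X : Set V}
    (hS : (G.induce S).TwoEdgeConnected) {a t r : V} (haS : a ∈ S) (haX : a ∈ X)
    (hX : ∀ c ∈ S, ∀ d ∈ S, c ∈ X → d ∉ X → G.Adj c d → c = t ∧ d = r) : S ⊆ X := by
  intro z hz
  have hX_univ := hS.eq_univ_of_subsingleton_boundary (X := {c : S | (c : V) ∈ X})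
    ⟨⟨a, haS⟩, haX⟩ fun c d c' d' hc hd hcd hc' hd' hcd' ↦ by
      obtain ⟨hct, hdr⟩ := hX c c.2 d d.2 hc hd hcd
      obtain ⟨hct', hdr'⟩ := hX c' c'.2 d' d'.2 hc' hd' hcd'
      exact ⟨Subtype.ext (hct.trans hct'.symm), Subtype.ext (hdr.trans hdr'.symm)⟩
  exact (Set.eq_univ_iff_forall.1 hX_univ ⟨z, hz⟩ :)

/-- `vuw` and `sbt` are triangles, joined by the edges `us` and `wb`. -/
theorem ClawFree.exists_ladder (hG : G.ClawFree) (hcubic : G.IsCubic)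
    (K : (G.deleteEdges {e | G.IsBridge e}).ConnectedComponent) {v u w x s b : V}
    (hu : u ∈ K.supp) (hw : w ∈ K.supp) (hs : s ∈ K.supp) (hx : x ∉ K.supp)
    (hvu : G.Adj v u) (hvw : G.Adj v w) (hvx : G.Adj v x) (huw : u ≠ w)
    (hus : G.Adj u s) (hsv : s ≠ v) (hsw : s ≠ w) (hwb : G.Adj w b) (hbu : b ≠ u) (hbv : b ≠ v)
    (hsb : G.Adj s b) :
    ∃ t ∈ K.supp, ∃ r, (∀ c, G.Adj t c ↔ c = s ∨ c = b ∨ c = r) ∧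
      t ∉ ({v, u, w, s, b} : Set V) ∧ r ∉ ({v, u, w, s, b, t} : Set V) ∧
      ∀ c ∈ ({v, u, w, s, b, t} : Set V), ∀ d, G.Adj c d →
        d ∈ ({v, u, w, s, b, t} : Set V) ∨ (c = v ∧ d = x) ∨ (c = t ∧ d = r) := by
  have hux : u ≠ x := ne_of_mem_of_not_mem hu hx
  have hwx : w ≠ x := ne_of_mem_of_not_mem hw hx
  have hNv := adj_iff_of_ncard_neighborSet_eq_three (hcubic v) hvu hvw hvx huw hux hwx
  have huw_adj : G.Adj u w := hG.adj_of_not_adj_of_not_adj hvu hvw hvx huw hux hwx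
    (fun h ↦ hx (K.mem_supp_of_adj_of_adj_of_adj hu hvu.symm hvx h.symm))
    (fun h ↦ hx (K.mem_supp_of_adj_of_adj_of_adj hw hvw.symm hvx h.symm))
  have hNu := adj_iff_of_ncard_neighborSet_eq_three (hcubic u) hvu.symm huw_adj hus
    hvw.ne hsv.symm hsw.symm
  have hNw := adj_iff_of_ncard_neighborSet_eq_three (hcubic w) hvw.symm huw_adj.symm hwb
    hvu.ne hbv.symm hbu.symm
  obtain ⟨t, hst, htu, htb⟩ := exists_adj_ne_ne_of_ncard_neighborSet_eq_three (hcubic s) hbu.symm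
  have hbt : G.Adj b t := hG.adj_of_not_adj_of_not_adj hsb hst hus.symm htb.symm hbu htu
    (by grind [Adj.ne, Adj.symm]) (by grind [Adj.ne, Adj.symm])
  have htK : t ∈ K.supp := K.mem_supp_of_adj_of_adj_of_adj hs hsb hbt hst
  have hNs := adj_iff_of_ncard_neighborSet_eq_three (hcubic s) hus.symm hsb hst
    hbu.symm htu.symm htb.symm
  have hNb := adj_iff_of_ncard_neighborSet_eq_three (hcubic b) hwb.symm hsb.symm hbt
    (by grind [Adj.ne, Adj.symm]) (by grind [Adj.ne, Adj.symm]) hst.ne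
  obtain ⟨r, htr, hrs, hrb⟩ := exists_adj_ne_ne_of_ncard_neighborSet_eq_three (hcubic t) hsb.ne
  have hNt := adj_iff_of_ncard_neighborSet_eq_three (hcubic t) hst.symm hbt.symm htr hsb.ne
    hrs.symm hrb.symm
  refine ⟨t, htK, r, hNt, ?_, ?_, ?_⟩
  · simp only [Set.mem_insert_iff, Set.mem_singleton_iff]
    grind [Adj.ne, Adj.symm]
  · simp only [Set.mem_insert_iff, Set.mem_singleton_iff]
    grind [Adj.ne, Adj.symm]
  · simp only [Set.mem_insert_iff, Set.mem_singleton_iff]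
    rintro c (rfl | rfl | rfl | rfl | rfl | rfl) d hcd <;> grind [Adj.ne, Adj.symm]

end SimpleGraph

theorem third_neighbors_nonadjacent_of_odd_general {V : Type*}
    (G : SimpleGraph V) (hclaw : G.ClawFree) (hcubic : G.IsCubic)
    (K : (G.deleteEdges {e | G.IsBridge e}).ConnectedComponent)
    (h2ec : (G.induce K.supp).TwoEdgeConnected)
    (hodd : Odd {v : K.supp | ((G.induce K.supp).neighborSet v).ncard = 2}.ncard)
    (v u w s b : K.supp)
    (hv2 : ((G.induce K.supp).neighborSet v).ncard = 2)
    (hvu : (G.induce K.supp).Adj v u) (hvw : (G.induce K.supp).Adj v w) (huw : u ≠ w)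
    (hus : (G.induce K.supp).Adj u s) (hsv : s ≠ v) (hsw : s ≠ w)
    (hwb : (G.induce K.supp).Adj w b) (hbu : b ≠ u) (hbv : b ≠ v) :
    ¬ (G.induce K.supp).Adj s b := by
  rw [induce_adj] at hvu hvw hus hwb ⊢
  rw [← Subtype.coe_ne_coe] at huw hsv hsw hbu hbv
  intro hsb
  obtain ⟨x, hvx, hxK⟩ :=
    exists_adj_notMem_of_ncard_neighborSet_induce_lt (a := v) (by rw [hv2, hcubic]; norm_num)
  obtain ⟨t, htK, r, hNt, htX, hrX, hexit⟩ := hclaw.exists_ladder hcubic K u.2 w.2 s.2 hxK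
    hvu hvw hvx huw hus hsv hsw hwb hbu hbv hsb
  lift t to K.supp using htK
  have hXK : ({↑v, ↑u, ↑w, ↑s, ↑b, ↑t} : Set V) ⊆ K.supp := by simp [Set.insert_subset_iff]
  have hKX : K.supp ⊆ {↑v, ↑u, ↑w, ↑s, ↑b, ↑t} :=
    h2ec.subset_of_subsingleton_boundary v.2 (by simp) fun c _ d hd hcX hdX hcd ↦
      ((hexit c hcX d hcd).resolve_left hdX).resolve_left fun h ↦ hxK (h.2 ▸ hd)
  have hrK : r ∉ K.supp := fun hr ↦ hrX (hKX hr)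
  have htdeg : ((G.induce K.supp).neighborSet t).ncard = 2 := by
    have : (G.induce K.supp).neighborSet t = {s, b} := by
      ext c
      show G.Adj t c ↔ c ∈ ({s, b} : Set K.supp)
      rw [hNt, Set.mem_insert_iff, Set.mem_singleton_iff, Subtype.coe_inj, Subtype.coe_inj,
        ← or_assoc, or_iff_left fun h : (c : V) = r ↦ hrK (h ▸ c.2)]
    rw [this, Set.ncard_pair (Subtype.coe_ne_coe.1 hsb.ne)]
  have hdeg2 : {z : K.supp | ((G.induce K.supp).neighborSet z).ncard = 2} = {v, t} := by
    refine Set.Subset.antisymm (fun z hz ↦ ?_) (by simp [Set.insert_subset_iff, hv2, htdeg])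
    obtain ⟨y, hzy, hyK⟩ := exists_adj_notMem_of_ncard_neighborSet_induce_lt (a := z)
      (by rw [show ((G.induce K.supp).neighborSet z).ncard = 2 from hz, hcubic]; norm_num)
    rcases hexit z (hKX z.2) y hzy with hyX | ⟨hzv, -⟩ | ⟨hzt, -⟩
    · exact absurd (hXK hyX) hyK
    · exact .inl (Subtype.ext hzv)
    · exact .inr (Subtype.ext hzt)
  rw [hdeg2, Set.ncard_pair fun h ↦ htX (by simp [h])] at hodd
  exact Nat.not_odd_iff_even.2 even_two hodd

/-- With `Gᵢ` as in the bridge-component set-up and an odd number of degree-2 vertices: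
if `v` has degree 2 in `Gᵢ` with neighbors `u` and `w`, `s` is the third neighbor of `u`
and `b` is the third neighbor of `w`, then `sb` is not an edge of `Gᵢ`. -/
theorem third_neighbors_nonadjacent_of_odd {V : Type*} [Fintype V]
    (G : SimpleGraph V) (hconn : G.Connected) (hclaw : G.ClawFree) (hcubic : G.IsCubic)
    (hbridge : ∃ e : Sym2 V, G.IsBridge e)
    (K : (G.deleteEdges {e | G.IsBridge e}).ConnectedComponent)
    (h2ec : (G.induce K.supp).TwoEdgeConnected)
    (hmaxdeg : (∀ v, ((G.induce K.supp).neighborSet v).ncard ≤ 3) ∧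
      ∃ v, ((G.induce K.supp).neighborSet v).ncard = 3)
    (hcard : 5 ≤ Nat.card K.supp)
    (hodd : Odd {v : K.supp | ((G.induce K.supp).neighborSet v).ncard = 2}.ncard)
    (v u w s b : K.supp)
    (hv2 : ((G.induce K.supp).neighborSet v).ncard = 2)
    (hvu : (G.induce K.supp).Adj v u) (hvw : (G.induce K.supp).Adj v w) (huw : u ≠ w)
    (hus : (G.induce K.supp).Adj u s) (hsv : s ≠ v) (hsw : s ≠ w)
    (hwb : (G.induce K.supp).Adj w b) (hbu : b ≠ u) (hbv : b ≠ v) :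
    ¬ (G.induce K.supp).Adj s b :=
  third_neighbors_nonadjacent_of_odd_general G hclaw hcubic K h2ec hodd v u w s b hv2 hvu hvw huw
    hus hsv hsw hwb hbu hbv
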